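/- arXiv:1511.01806 — 5 statements merged into one kernel-verified Lean document; each statement's English description precedes it below -/
import Mathlib

section
/- The class of AT-free graphs is closed under edge contractions: if G is a simple graph containing no asteroidal triple, and H is obtained from G by contracting an edge {x,y} (replacing x and y by a single new vertex whose neighborhood is (N(x) ∪ N(y)) \ {x,y}), then H contains no asteroidal triple. -/
open SimpleGraph

/-- The closed neighborhood of a vertex. -/
def closedNbh {V : Type*} (G : SimpleGraph V) (v : V) : Set V :=
  insert v (G.neighborSet v)

/-- `u` and `w` are joined by a walk all of whose vertices avoid the set `A`. -/
def reachAvoid {V : Type*} (G : SimpleGraph V) (A : Set V) (u w : V) : Prop :=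
  ∃ p : G.Walk u w, ∀ x ∈ p.support, x ∉ A

/-- `{p, q, r}` is an asteroidal triple: three pairwise nonadjacent (distinct) vertices
such that every two of them are joined by a path avoiding the closed neighborhood
of the third. -/
def IsAT {V : Type*} (G : SimpleGraph V) (p q r : V) : Prop :=
  p ≠ q ∧ p ≠ r ∧ q ≠ r ∧ ¬ G.Adj p q ∧ ¬ G.Adj p r ∧ ¬ G.Adj q r ∧
  reachAvoid G (closedNbh G r) p q ∧ reachAvoid G (closedNbh G q) p r ∧
  reachAvoid G (closedNbh G p) q r

/-- `C` is a block at `v`: a connected component of `G − N[v]`. -/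
def IsBlockAt {V : Type*} (G : SimpleGraph V) (v : V) (C : Set V) : Prop :=
  C.Nonempty ∧ C ⊆ (closedNbh G v)ᶜ ∧ (G.induce C).Connected ∧
  ∀ u ∉ C, u ∉ closedNbh G v → ∀ c ∈ C, ¬ G.Adj u c

/-- `z` is between the nonadjacent vertices `x` and `y`: `z` and `x` lie in a common
component of `G − N[y]`, and `z` and `y` lie in a common component of `G − N[x]`. -/
def Between {V : Type*} (G : SimpleGraph V) (x y z : V) : Prop :=
  reachAvoid G (closedNbh G y) x z ∧ reachAvoid G (closedNbh G x) y z

/-- The interval between `x` and `y`: all vertices between `x` and `y`. -/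
def interval {V : Type*} (G : SimpleGraph V) (x y : V) : Set V :=
  {z | Between G x y z}

/-- The contraction of the edge `{x, y}` of `G`: the vertices `x` and `y` are
replaced by a single new vertex `none`, whose neighborhood is
`(N(x) ∪ N(y)) \ {x, y}`. -/
def contractEdge {V : Type*} (G : SimpleGraph V) (x y : V) :
    SimpleGraph (Option {v : V // v ≠ x ∧ v ≠ y}) where
  Adj a b :=
    match a, b with
    | some u, some w => G.Adj u.1 w.1
    | some u, none => G.Adj u.1 x ∨ G.Adj u.1 y
    | none, some w => G.Adj w.1 x ∨ G.Adj w.1 y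
    | none, none => False
  symm := by
    refine ⟨?_⟩
    rintro (_ | a) (_ | b) h <;> simp_all [SimpleGraph.adj_comm]
  loopless := by
    refine ⟨?_⟩
    rintro (_ | a) h <;> simp_all

/-
Send every vertex of the contraction `H` to its fiber in `G`: `{x, y}` for the new vertex,
`{u}` otherwise. Fibers are connected, adjacent vertices of `H` have adjacent fibers, and a
vertex outside `N_H[a]` has its fiber outside `N_G[a₀]` for every `a₀` in the fiber of `a`.
Hence a walk of `H` avoiding `N_H[a]` lifts to a walk of `G` avoiding `N_G[a₀]`, and choosing
one vertex in each fiber turns an asteroidal triple of `H` into one of `G`.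
-/

namespace reachAvoid

variable {V : Type*} {G : SimpleGraph V} {A : Set V} {u v w : V}

lemma refl (hu : u ∉ A) : reachAvoid G A u u := ⟨Walk.nil, by simpa⟩

lemma of_adj (h : G.Adj u w) (hu : u ∉ A) (hw : w ∉ A) : reachAvoid G A u w :=
  ⟨Walk.cons h Walk.nil, by simp_all⟩

lemma trans (h₁ : reachAvoid G A u v) (h₂ : reachAvoid G A v w) : reachAvoid G A u w := by
  obtain ⟨p, hp⟩ := h₁
  obtain ⟨q, hq⟩ := h₂
  refine ⟨p.append q, fun z hz => ?_⟩
  rcases (Walk.mem_support_append_iff _ _).1 hz with h | h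
  exacts [hp z h, hq z h]

end reachAvoid

section contractEdge

variable {V : Type*} {G : SimpleGraph V} {x y : V} {a b c : Option {v : V // v ≠ x ∧ v ≠ y}}

def contractFiber (x y : V) : Option {v : V // v ≠ x ∧ v ≠ y} → Set V
  | some u => {u.1}
  | none => {x, y}

def contractRep (x y : V) : Option {v : V // v ≠ x ∧ v ≠ y} → V
  | some u => u.1
  | none => x

lemma contractRep_mem_contractFiber (a : Option {v : V // v ≠ x ∧ v ≠ y}) :
    contractRep x y a ∈ contractFiber x y a := by
  cases a <;> simp [contractRep, contractFiber]

lemma ne_of_mem_contractFiber (hab : a ≠ b) {a₀ b₀ : V} (ha : a₀ ∈ contractFiber x y a)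
    (hb : b₀ ∈ contractFiber x y b) : a₀ ≠ b₀ := by
  rintro rfl
  rcases a with _ | ⟨u, hu⟩ <;> rcases b with _ | ⟨w, hw⟩ <;>
    simp only [contractFiber, Set.mem_insert_iff, Set.mem_singleton_iff] at ha hb
  · exact hab rfl
  · subst hb
    rcases ha with h | h
    exacts [hw.1 h, hw.2 h]
  · subst ha
    rcases hb with h | h
    exacts [hu.1 h, hu.2 h]
  · subst ha hb
    exact hab rfl

lemma not_adj_of_mem_contractFiber (hab : a ≠ b) (h : ¬ (contractEdge G x y).Adj a b)
    {a₀ b₀ : V} (ha : a₀ ∈ contractFiber x y a) (hb : b₀ ∈ contractFiber x y b) :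
    ¬ G.Adj a₀ b₀ := by
  rcases a with _ | u <;> rcases b with _ | w <;>
    simp only [contractFiber, Set.mem_insert_iff, Set.mem_singleton_iff] at ha hb
  · exact absurd rfl hab
  · rcases ha with rfl | rfl <;> subst hb <;> simp_all [contractEdge, adj_comm]
  · rcases hb with rfl | rfl <;> subst ha <;> simp_all [contractEdge]
  · subst ha hb; exact h

lemma exists_adj_of_contractEdge_adj (h : (contractEdge G x y).Adj a b) :
    ∃ u ∈ contractFiber x y a, ∃ w ∈ contractFiber x y b, G.Adj u w := by
  rcases a with _ | u <;> rcases b with _ | w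
  · exact absurd h (by simp [contractEdge])
  · rcases (h : G.Adj w.1 x ∨ G.Adj w.1 y) with h | h
    · exact ⟨x, by simp [contractFiber], w.1, rfl, h.symm⟩
    · exact ⟨y, by simp [contractFiber], w.1, rfl, h.symm⟩
  · rcases (h : G.Adj u.1 x ∨ G.Adj u.1 y) with h | h
    · exact ⟨u.1, rfl, x, by simp [contractFiber], h⟩
    · exact ⟨u.1, rfl, y, by simp [contractFiber], h⟩
  · exact ⟨u.1, rfl, w.1, rfl, h⟩

lemma reachAvoid_of_mem_contractFiber (hxy : G.Adj x y) {A : Set V}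
    (hA : Disjoint (contractFiber x y a) A) {u w : V} (hu : u ∈ contractFiber x y a)
    (hw : w ∈ contractFiber x y a) : reachAvoid G A u w := by
  have avoid : ∀ v ∈ contractFiber x y a, v ∉ A := fun v hv => hA.notMem_of_mem_left hv
  rcases a with _ | ⟨v, hv⟩
  · simp only [contractFiber, Set.mem_insert_iff, Set.mem_singleton_iff] at hu hw
    have hx := avoid x (by simp [contractFiber])
    have hy := avoid y (by simp [contractFiber])
    rcases hu with rfl | rfl <;> rcases hw with rfl | rfl
    exacts [.refl hx, .of_adj hxy hx hy, .of_adj hxy.symm hy hx, .refl hy]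
  · simp only [contractFiber, Set.mem_singleton_iff] at hu hw
    subst hu hw
    exact .refl (avoid _ rfl)

lemma SimpleGraph.Walk.reachAvoid_of_contractEdge (hxy : G.Adj x y) {A : Set V}
    (W : (contractEdge G x y).Walk a b)
    (hW : ∀ v ∈ W.support, Disjoint (contractFiber x y v) A) {a₀ b₀ : V}
    (ha : a₀ ∈ contractFiber x y a) (hb : b₀ ∈ contractFiber x y b) :
    reachAvoid G A a₀ b₀ := by
  induction W generalizing a₀ with
  | nil => exact reachAvoid_of_mem_contractFiber hxy (hW _ (by simp)) ha hb
  | cons h W ih =>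
    obtain ⟨u, hu, w, hw, huw⟩ := exists_adj_of_contractEdge_adj h
    have hA := hW _ (Walk.start_mem_support _)
    have hA' := hW _ (List.mem_cons_of_mem _ W.start_mem_support)
    refine (reachAvoid_of_mem_contractFiber hxy hA ha hu).trans
      ((reachAvoid.of_adj huw (hA.notMem_of_mem_left hu) (hA'.notMem_of_mem_left hw)).trans
      (ih (fun v hv => hW v (by simp [hv])) hw hb))

lemma disjoint_contractFiber_closedNbh {v : Option {v : V // v ≠ x ∧ v ≠ y}}
    (hv : v ∉ closedNbh (contractEdge G x y) a) {a₀ : V} (ha : a₀ ∈ contractFiber x y a) :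
    Disjoint (contractFiber x y v) (closedNbh G a₀) := by
  simp only [closedNbh, Set.mem_insert_iff, mem_neighborSet, not_or] at hv
  refine Set.disjoint_left.2 fun v₀ hv₀ => ?_
  simp only [closedNbh, Set.mem_insert_iff, mem_neighborSet, not_or]
  exact ⟨ne_of_mem_contractFiber hv.1 hv₀ ha,
    not_adj_of_mem_contractFiber (Ne.symm hv.1) hv.2 ha hv₀⟩

lemma reachAvoid_of_contractEdge (hxy : G.Adj x y)
    (h : reachAvoid (contractEdge G x y) (closedNbh (contractEdge G x y) c) a b)
    {a₀ b₀ c₀ : V}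
    (ha : a₀ ∈ contractFiber x y a) (hb : b₀ ∈ contractFiber x y b)
    (hc : c₀ ∈ contractFiber x y c) : reachAvoid G (closedNbh G c₀) a₀ b₀ :=
  let ⟨W, hW⟩ := h
  W.reachAvoid_of_contractEdge hxy (fun v hv => disjoint_contractFiber_closedNbh (hW v hv) hc) ha hb

lemma IsAT.of_contractEdge (hxy : G.Adj x y) (h : IsAT (contractEdge G x y) a b c) :
    IsAT G (contractRep x y a) (contractRep x y b) (contractRep x y c) := by
  obtain ⟨hab, hac, hbc, nab, nac, nbc, rab, rac, rbc⟩ := h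
  have ha := contractRep_mem_contractFiber (x := x) (y := y) a
  have hb := contractRep_mem_contractFiber (x := x) (y := y) b
  have hc := contractRep_mem_contractFiber (x := x) (y := y) c
  exact ⟨ne_of_mem_contractFiber hab ha hb, ne_of_mem_contractFiber hac ha hc,
    ne_of_mem_contractFiber hbc hb hc, not_adj_of_mem_contractFiber hab nab ha hb,
    not_adj_of_mem_contractFiber hac nac ha hc, not_adj_of_mem_contractFiber hbc nbc hb hc,
    reachAvoid_of_contractEdge hxy rab ha hb hc, reachAvoid_of_contractEdge hxy rac ha hc hb,
    reachAvoid_of_contractEdge hxy rbc hb hc ha⟩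

end contractEdge

/-- the class of AT-free graphs is closed under edge contractions. -/
theorem stmt1 {V : Type*} (G : SimpleGraph V) (x y : V) (hxy : G.Adj x y)
    (hG : ∀ p q r : V, ¬ IsAT G p q r) :
    ∀ p q r, ¬ IsAT (contractEdge G x y) p q r :=
  fun _ _ _ h => hG _ _ _ (h.of_contractEdge hxy)
end

section
/- Let G be a connected simple graph, let x be an extreme vertex of G, let C be a largest component of G − N[x], let S = N(C) be the set of vertices outside C with a neighbor in C, and let X = V(G) \ (S ∪ C). Then x ∈ X and every vertex of X is adjacent to every vertex of S. -/
open SimpleGraph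

/-!
If some `u ∈ X` missed some `s ∈ S`, then `C ∪ {s}` would be a connected subset of
`G − N[u]`: `C` avoids `N[u]` because `u ∉ C ∪ S`, and `s` is attached to `C`. The component of
`G − N[u]` containing it would be strictly larger than `C`, contradicting extremality of `x`.
-/

namespace SimpleGraph

variable {V : Type*} {G : SimpleGraph V}

lemma mem_closedNbh {v w : V} : w ∈ closedNbh G v ↔ w = v ∨ G.Adj v w := Iff.rfl

lemma connected_induce_insert_of_adj {s c : V} {C : Set V} (hC : (G.induce C).Connected)
    (hc : c ∈ C) (hsc : G.Adj s c) : (G.induce (insert s C)).Connected := by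
  simpa using connected_induce_union (s := {s}) (by simp [induce_singleton_eq_top])
    hC.preconnected rfl hc hsc

lemma isBlockAt_of_maximal {v : V} {D : Set V}
    (hD : Maximal (fun D ↦ D ⊆ (closedNbh G v)ᶜ ∧ (G.induce D).Connected) D) :
    IsBlockAt G v D := by
  refine ⟨Set.nonempty_coe_sort.mp hD.prop.2.nonempty, hD.prop.1, hD.prop.2,
    fun w hwD hwv c hc hwc ↦ hwD ?_⟩
  exact hD.mem_of_prop_insert
    ⟨Set.insert_subset hwv hD.prop.1, connected_induce_insert_of_adj hD.prop.2 hc hwc⟩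

lemma exists_isBlockAt_superset [Finite V] {v : V} {T : Set V}
    (hTv : T ⊆ (closedNbh G v)ᶜ) (hT : (G.induce T).Connected) :
    ∃ D, T ⊆ D ∧ IsBlockAt G v D := by
  obtain ⟨D, hTD, hD⟩ := Finite.exists_le_maximal
    (p := fun D ↦ D ⊆ (closedNbh G v)ᶜ ∧ (G.induce D).Connected) ⟨hTv, hT⟩
  exact ⟨D, hTD, isBlockAt_of_maximal hD⟩

end SimpleGraph

theorem stmt3_general {V : Type*} [Fintype V] (G : SimpleGraph V) (x : V)
    (C : Set V) (hC : IsBlockAt G x C)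
    (hmax : ∀ (v : V) (D : Set V), IsBlockAt G v D → D.ncard ≤ C.ncard)
    (S X : Set V) (hS : S = {u | u ∉ C ∧ ∃ c ∈ C, G.Adj u c})
    (hX : X = (S ∪ C)ᶜ) :
    x ∈ X ∧ ∀ u ∈ X, ∀ s ∈ S, G.Adj u s := by
  subst hS hX
  obtain ⟨-, hCx, hCconn, -⟩ := hC
  simp only [Set.mem_compl_iff, Set.mem_union, Set.mem_ofPred_eq, not_or, not_and, not_exists]
  refine ⟨⟨fun _ c hc hxc ↦ hCx hc (mem_closedNbh.2 (.inr hxc)),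
    fun hx ↦ hCx hx (mem_closedNbh.2 (.inl rfl))⟩, ?_⟩
  rintro u ⟨huS, huC⟩ s ⟨hsC, c, hc, hsc⟩
  by_contra hus
  have hsu : s ∉ closedNbh G u := by
    rintro (rfl | hus')
    exacts [huS huC c hc hsc, hus hus']
  have hCu : C ⊆ (closedNbh G u)ᶜ := by
    rintro c' hc' (rfl | huc')
    exacts [huC hc', huS huC c' hc' huc']
  obtain ⟨D, hsCD, hD⟩ := exists_isBlockAt_superset (Set.insert_subset hsu hCu)
    (connected_induce_insert_of_adj hCconn hc hsc)
  have hlt : C.ncard < D.ncard := by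
    calc C.ncard < (insert s C).ncard := by rw [Set.ncard_insert_of_notMem hsC]; omega
      _ ≤ D.ncard := Set.ncard_le_ncard hsCD
  exact (hmax u D hD).not_gt hlt

/-- if `x` is an extreme vertex of the connected graph `G` (the largest
component `C` of `G − N[x]` has maximal cardinality among components of `G − N[v]`
over all vertices `v`), `S = N(C)` and `X = V(G) \ (S ∪ C)`, then `x ∈ X` and every
vertex of `X` is adjacent to every vertex of `S`. -/
theorem stmt3 {V : Type*} [Fintype V] (G : SimpleGraph V) (hG : G.Connected) (x : V)
    (C : Set V) (hC : IsBlockAt G x C)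
    (hmax : ∀ (v : V) (D : Set V), IsBlockAt G v D → D.ncard ≤ C.ncard)
    (S X : Set V) (hS : S = {u | u ∉ C ∧ ∃ c ∈ C, G.Adj u c})
    (hX : X = (S ∪ C)ᶜ) :
    x ∈ X ∧ ∀ u ∈ X, ∀ s ∈ S, G.Adj u s :=
  stmt3_general G x C hC hmax S X hS hX
end

section
/- Let G be a connected simple graph, x an extreme vertex, C a largest component of G − N[x], S = N(C), and X = V(G) \ (S ∪ C). Then every vertex of X is an extreme vertex of G. -/
open SimpleGraph

/-!
A vertex `u` outside `N(C) ∪ C` is neither in `C` nor adjacent to it, so `C` is a connected set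
of `G − N[u]`. The component of `G − N[u]` containing `C` is then at least as large as `C`, which
is at least as large as any component of any `G − N[v]`.
-/

/-- The witness is the union of all connected supersets of `A` avoiding `N[u]`; by maximality
no edge leaves it outside `N[u]`. -/
theorem exists_isBlockAt_superset {V : Type*} (G : SimpleGraph V) (u : V) {A : Set V}
    (hAconn : (G.induce A).Connected) (hAavoid : A ⊆ (closedNbh G u)ᶜ) :
    ∃ K : Set V, IsBlockAt G u K ∧ A ⊆ K := by
  set 𝒦 : Set (Set V) := {B | A ⊆ B ∧ B ⊆ (closedNbh G u)ᶜ ∧ (G.induce B).Connected}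
  have hA𝒦 : A ∈ 𝒦 := ⟨subset_rfl, hAavoid, hAconn⟩
  obtain ⟨a, ha⟩ := hAconn.nonempty
  have hK𝒦 : ⋃₀ 𝒦 ∈ 𝒦 := by
    refine ⟨Set.subset_sUnion_of_mem hA𝒦, Set.sUnion_subset fun B hB => hB.2.1, ?_⟩
    exact induce_sUnion_connected_of_pairwise_not_disjoint ⟨A, hA𝒦⟩
      (fun hB hB' => ⟨a, hB.1 ha, hB'.1 ha⟩) (fun hB => hB.2.2)
  refine ⟨⋃₀ 𝒦, ⟨⟨a, hK𝒦.1 ha⟩, hK𝒦.2.1, hK𝒦.2.2, ?_⟩, hK𝒦.1⟩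
  intro w hwK hwN c hcK hwc
  have hKw𝒦 : ⋃₀ 𝒦 ∪ {w} ∈ 𝒦 := by
    refine ⟨hK𝒦.1.trans Set.subset_union_left,
      Set.union_subset hK𝒦.2.1 (Set.singleton_subset_iff.mpr hwN), ?_⟩
    exact connected_induce_union hK𝒦.2.2.preconnected Preconnected.of_subsingleton
      hcK (Set.mem_singleton w) hwc.symm
  exact hwK (Set.subset_sUnion_of_mem hKw𝒦 (Set.mem_union_right _ rfl))

theorem subset_compl_closedNbh_of_notMem {V : Type*} (G : SimpleGraph V) {C : Set V} {u : V}
    (huC : u ∉ C) (huN : ¬ ∃ c ∈ C, G.Adj u c) : C ⊆ (closedNbh G u)ᶜ := by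
  rintro c hc (rfl | hadj)
  · exact huC hc
  · exact huN ⟨c, hc, hadj⟩

theorem stmt4_general {V : Type*} [Fintype V] (G : SimpleGraph V) (x : V)
    (C : Set V) (hC : IsBlockAt G x C)
    (hmax : ∀ (v : V) (D : Set V), IsBlockAt G v D → D.ncard ≤ C.ncard)
    (S X : Set V) (hS : S = {u | u ∉ C ∧ ∃ c ∈ C, G.Adj u c})
    (hX : X = (S ∪ C)ᶜ) :
    ∀ u ∈ X, ∀ (v : V) (D : Set V), IsBlockAt G v D →
      ∃ C' : Set V, IsBlockAt G u C' ∧ D.ncard ≤ C'.ncard := by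
  intro u hu v D hD
  obtain ⟨huS, huC⟩ : u ∉ S ∧ u ∉ C := by simpa [hX, not_or] using hu
  have hCavoid : C ⊆ (closedNbh G u)ᶜ :=
    subset_compl_closedNbh_of_notMem G huC fun hN => huS (hS ▸ ⟨huC, hN⟩)
  obtain ⟨K, hK, hCK⟩ := exists_isBlockAt_superset G u hC.2.2.1 hCavoid
  exact ⟨K, hK, (hmax v D hD).trans (Set.ncard_le_ncard hCK)⟩

/-- with `x` extreme, `C` a largest component of `G − N[x]`, `S = N(C)`
and `X = V(G) \ (S ∪ C)`, every vertex of `X` is an extreme vertex of `G`. -/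
theorem stmt4 {V : Type*} [Fintype V] (G : SimpleGraph V) (hG : G.Connected) (x : V)
    (C : Set V) (hC : IsBlockAt G x C)
    (hmax : ∀ (v : V) (D : Set V), IsBlockAt G v D → D.ncard ≤ C.ncard)
    (S X : Set V) (hS : S = {u | u ∉ C ∧ ∃ c ∈ C, G.Adj u c})
    (hX : X = (S ∪ C)ᶜ) :
    ∀ u ∈ X, ∀ (v : V) (D : Set V), IsBlockAt G v D →
      ∃ C' : Set V, IsBlockAt G u C' ∧ D.ncard ≤ C'.ncard :=
  stmt4_general G x C hC hmax S X hS hX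
end

section
/- Let G be a connected simple graph, x an extreme vertex, C a largest component of G − N[x], S = N(C), and X = V(G) \ (S ∪ C). Then X is a module of G: every vertex of V(G) \ X is either adjacent to all vertices of X or to no vertex of X. -/
open SimpleGraph

/-
If `v ∈ S` missed some `u ∈ X`, then `C ∪ {v}` would be a connected set avoiding `N[u]`
(vertices of `X` have no neighbour in `C`), so the component of `G − N[u]` containing `v`
would be strictly larger than `C`, against the maximality of `C`. A vertex of `C` sees no
vertex of `X` by the definition of `S`.
-/

section

variable {V : Type*} {G : SimpleGraph V}

lemma reachAvoid_append {A : Set V} {a b c : V} (h : reachAvoid G A a b) (p : G.Walk b c)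
    (hp : ∀ y ∈ p.support, y ∉ A) : reachAvoid G A a c := by
  obtain ⟨q, hq⟩ := h
  refine ⟨q.append p, fun y hy => ?_⟩
  rw [Walk.support_append, List.mem_append] at hy
  exact hy.elim (hq y) (fun hy => hp y (List.mem_of_mem_tail hy))

lemma subset_reachAvoid_of_preconnected {A C : Set V} (hC : (G.induce C).Preconnected)
    (hCA : Disjoint C A) {v c : V} (hc : c ∈ C) (hvc : reachAvoid G A v c) :
    C ⊆ {w | reachAvoid G A v w} := by
  intro w hw
  obtain ⟨q⟩ := hC ⟨c, hc⟩ ⟨w, hw⟩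
  have hqA : ∀ y ∈ (q.map (Embedding.induce C).toHom).support, y ∉ A := by
    intro y hy
    simp only [Walk.support_map, List.mem_map] at hy
    obtain ⟨⟨z, hz⟩, -, rfl⟩ := hy
    exact hCA.notMem_of_mem_left hz
  exact reachAvoid_append hvc _ hqA

lemma isBlockAt_reachAvoid {u v : V} (hv : v ∉ closedNbh G u) :
    IsBlockAt G u {w | reachAvoid G (closedNbh G u) v w} := by
  have hvD : v ∈ {w | reachAvoid G (closedNbh G u) v w} := ⟨Walk.nil, by simpa using hv⟩
  refine ⟨⟨v, hvD⟩, fun w ⟨p, hp⟩ => hp w p.end_mem_support, ?_, ?_⟩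
  · refine induce_connected_of_patches v hvD ?_
    rintro w ⟨p, hp⟩
    refine ⟨{y | y ∈ p.support}, fun y hy => ?_, p.start_mem_support, p.end_mem_support,
      p.connected_induce_support.preconnected _ _⟩
    classical
    exact ⟨p.takeUntil y hy, fun z hz => hp z (p.support_takeUntil_subset_support hy hz)⟩
  · rintro w hwD hw d ⟨p, hp⟩ hwd
    refine hwD ⟨p.concat hwd.symm, fun y hy => ?_⟩
    rw [Walk.support_concat, List.mem_append, List.mem_singleton] at hy
    exact hy.elim (hp y) fun h => h ▸ hw

lemma ncard_lt_ncard_reachAvoid [Finite V] {C : Set V} (hC : (G.induce C).Preconnected)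
    {u v c : V} (hCu : Disjoint C (closedNbh G u)) (hvC : v ∉ C) (hc : c ∈ C)
    (hvc : G.Adj v c) (hvu : v ∉ closedNbh G u) :
    C.ncard < {w | reachAvoid G (closedNbh G u) v w}.ncard := by
  have hvc_reach : reachAvoid G (closedNbh G u) v c := by
    refine ⟨Walk.cons hvc Walk.nil, fun y hy => ?_⟩
    simp only [Walk.support_cons, Walk.support_nil, List.mem_cons, List.not_mem_nil,
      or_false] at hy
    rcases hy with rfl | rfl
    exacts [hvu, hCu.notMem_of_mem_left hc]
  have hsub : insert v C ⊆ {w | reachAvoid G (closedNbh G u) v w} :=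
    Set.insert_subset ⟨Walk.nil, by simpa using hvu⟩
      (subset_reachAvoid_of_preconnected hC hCu hc hvc_reach)
  calc C.ncard < (insert v C).ncard := by
        rw [Set.ncard_insert_of_notMem hvC (Set.toFinite C)]; omega
    _ ≤ _ := Set.ncard_le_ncard hsub (Set.toFinite _)

end

theorem stmt5_general {V : Type*} [Fintype V] (G : SimpleGraph V) (x : V)
    (C : Set V) (hC : IsBlockAt G x C)
    (hmax : ∀ (v : V) (D : Set V), IsBlockAt G v D → D.ncard ≤ C.ncard)
    (S X : Set V) (hS : S = {u | u ∉ C ∧ ∃ c ∈ C, G.Adj u c})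
    (hX : X = (S ∪ C)ᶜ) :
    ∀ v ∉ X, (∀ u ∈ X, G.Adj v u) ∨ (∀ u ∈ X, ¬ G.Adj v u) := by
  subst hS hX
  intro v hv
  rw [Set.notMem_compl_iff] at hv
  simp only [Set.mem_compl_iff, Set.mem_union, Set.mem_ofPred_eq, not_or, not_and,
    not_exists] at hv ⊢
  rcases hv with ⟨hvC, c, hc, hvc⟩ | hvC
  · refine Or.inl fun u ⟨huS, huC⟩ => by_contra fun hvu => ?_
    have hCu : Disjoint C (closedNbh G u) := Set.disjoint_left.mpr fun w hw hwu =>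
      hwu.elim (fun h => huC (h ▸ hw)) (huS huC w hw)
    have hvu' : v ∉ closedNbh G u := fun h =>
      h.elim (fun h => huS huC c hc (h ▸ hvc)) fun h => hvu h.symm
    exact (ncard_lt_ncard_reachAvoid hC.2.2.1.preconnected hCu hvC hc hvc hvu').not_ge
      (hmax u _ (isBlockAt_reachAvoid hvu'))
  · exact Or.inr fun u ⟨huS, huC⟩ hvu => huS huC v hvC hvu.symm

/-- with `x` extreme, `C` a largest component of `G − N[x]`, `S = N(C)`
and `X = V(G) \ (S ∪ C)`, the set `X` is a module of `G`: every vertex outside `X`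
is adjacent to all vertices of `X` or to none of them. -/
theorem stmt5 {V : Type*} [Fintype V] (G : SimpleGraph V) (hG : G.Connected) (x : V)
    (C : Set V) (hC : IsBlockAt G x C)
    (hmax : ∀ (v : V) (D : Set V), IsBlockAt G v D → D.ncard ≤ C.ncard)
    (S X : Set V) (hS : S = {u | u ∉ C ∧ ∃ c ∈ C, G.Adj u c})
    (hX : X = (S ∪ C)ᶜ) :
    ∀ v ∉ X, (∀ u ∈ X, G.Adj v u) ∨ (∀ u ∈ X, ¬ G.Adj v u) :=
  stmt5_general G x C hC hmax S X hS hX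
end

section
/- Every cocomparability graph is AT-free: if G is a simple graph whose vertices can be represented by continuous functions f_v : [0,1] → ℝ such that u and v are adjacent if and only if u ≠ v and the functions f_u and f_v intersect (there exists t with f_u(t) = f_v(t)), then G contains no asteroidal triple. -/
/-!
Two nonadjacent vertices have disjoint functions, so by the intermediate value theorem one lies
strictly below the other everywhere. Hence the three functions of an independent triple are
totally ordered, and some vertex `m` lies strictly between the other two. A walk avoiding `N[m]`
can never cross `f m`: adjacent vertices share a value, and a vertex outside `N[m]` stays on one
side of `f m`. So the outer two vertices are not joined by such a walk, and no asteroidal triple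
exists.
-/

open SimpleGraph

theorem notMem_closedNbh {V : Type*} {G : SimpleGraph V} {m v : V} :
    v ∉ closedNbh G m ↔ v ≠ m ∧ ¬ G.Adj m v := by
  simp [closedNbh]

theorem reachAvoid.symm {V : Type*} {G : SimpleGraph V} {A : Set V} {u w : V}
    (h : reachAvoid G A u w) : reachAvoid G A w u := by
  obtain ⟨p, hp⟩ := h
  exact ⟨p.reverse, fun x hx => hp x (by simpa using hx)⟩

section

variable {X α : Type*} [TopologicalSpace X] [LinearOrder α] [TopologicalSpace α]
  [OrderClosedTopology α]

theorem forall_lt_or_forall_gt_of_forall_ne [PreconnectedSpace X] {f g : X → α}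
    (hf : Continuous f) (hg : Continuous g) (hne : ∀ x, f x ≠ g x) :
    (∀ x, f x < g x) ∨ ∀ x, g x < f x := by
  by_contra! h
  obtain ⟨⟨a, ha⟩, ⟨b, hb⟩⟩ := h
  obtain ⟨x, hx⟩ := intermediate_value_univ₂ hf hg hb ha
  exact hne x hx

section FunctionModel

variable [PreconnectedSpace X] {V : Type*} {G : SimpleGraph V} {f : V → X → α}
  (hcont : ∀ v, Continuous (f v)) (hadj : ∀ u v, G.Adj u v ↔ u ≠ v ∧ ∃ t, f u t = f v t)
include hcont hadj

theorem forall_lt_or_forall_gt_of_not_adj {u v : V} (hne : u ≠ v) (hnadj : ¬ G.Adj u v) :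
    (∀ t, f u t < f v t) ∨ ∀ t, f v t < f u t :=
  forall_lt_or_forall_gt_of_forall_ne (hcont u) (hcont v) fun t h =>
    hnadj ((hadj u v).2 ⟨hne, t, h⟩)

theorem forall_lt_of_adj_of_notMem_closedNbh {m u v : V} (huv : G.Adj u v)
    (hu : ∀ t, f u t < f m t) (hv : v ∉ closedNbh G m) : ∀ t, f v t < f m t := by
  obtain ⟨hvm, hmv⟩ := notMem_closedNbh.1 hv
  refine (forall_lt_or_forall_gt_of_not_adj hcont hadj hvm fun h => hmv h.symm).resolve_right ?_
  intro hgt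
  obtain ⟨-, t, ht⟩ := (hadj u v).1 huv
  exact lt_asymm (hu t) (ht ▸ hgt t)

theorem forall_lt_of_walk_avoiding {m a b : V} (p : G.Walk a b)
    (hp : ∀ x ∈ p.support, x ∉ closedNbh G m) (ha : ∀ t, f a t < f m t) :
    ∀ t, f b t < f m t := by
  induction p with
  | nil => exact ha
  | cons huv p ih =>
    refine ih (fun x hx => hp x (List.mem_cons_of_mem _ hx)) ?_
    exact forall_lt_of_adj_of_notMem_closedNbh hcont hadj huv ha (hp _ (by simp))

theorem not_reachAvoid_of_lt_of_lt [Nonempty X] {m a b : V} (ha : ∀ t, f a t < f m t)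
    (hb : ∀ t, f m t < f b t) : ¬ reachAvoid G (closedNbh G m) a b := by
  rintro ⟨p, hp⟩
  obtain ⟨t⟩ := ‹Nonempty X›
  exact lt_asymm (forall_lt_of_walk_avoiding hcont hadj p hp ha t) (hb t)

end FunctionModel

end

/-- every cocomparability graph (a graph with a continuous function
intersection model on `[0,1]`) is AT-free. -/
theorem stmt7 {V : Type*} (G : SimpleGraph V) (f : V → unitInterval → ℝ)
    (hcont : ∀ v : V, Continuous (f v))
    (hadj : ∀ u v : V, G.Adj u v ↔ u ≠ v ∧ ∃ t : unitInterval, f u t = f v t) :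
    ∀ p q r : V, ¬ IsAT G p q r := by
  rintro p q r ⟨hpq, hpr, hqr, hnpq, hnpr, hnqr, hRpq, hRpr, hRqr⟩
  have separate {m a b : V} := not_reachAvoid_of_lt_of_lt hcont hadj (m := m) (a := a) (b := b)
  have cyclic {a b c : V} (hab : ∀ t, f a t < f b t) (hbc : ∀ t, f b t < f c t)
      (hca : ∀ t, f c t < f a t) : False :=
    lt_asymm (hab 0) ((hbc 0).trans (hca 0))
  rcases forall_lt_or_forall_gt_of_not_adj hcont hadj hpq hnpq with h1 | h1 <;>
  rcases forall_lt_or_forall_gt_of_not_adj hcont hadj hpr hnpr with h2 | h2 <;>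
  rcases forall_lt_or_forall_gt_of_not_adj hcont hadj hqr hnqr with h3 | h3
  · exact separate h1 h3 hRpr
  · exact separate h2 h3 hRpq
  · exact cyclic h1 h3 h2
  · exact separate h2 h1 hRqr.symm
  · exact separate h1 h2 hRqr
  · exact cyclic h2 h3 h1
  · exact separate h3 h2 hRpq.symm
  · exact separate h3 h1 hRpr.symm
end
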